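/- arXiv:2503.16736 — 4 statements merged into one kernel-verified Lean document; each statement's English description precedes it below -/
import Mathlib

section
/- Let H be the KW semigroup H = ⟨p,q⟩ ∪ {pq - xp - yq : 1 ≤ x ≤ x_i and 1 ≤ y ≤ y_i for some i}, determined by sequences 0 < x_1 < ⋯ < x_{n-2} ≤ q/2 and p/2 ≥ y_1 > ⋯ > y_{n-2} > 0. Then the Apéry set of H with respect to its multiplicity p equals {λq : 0 ≤ λ < p - y_1} ∪ ⋃_{i=1}^{n-2} {h_i + λq : 0 ≤ λ < y_i - y_{i+1}}, where h_i = pq - x_i·p - y_i·q and y_{n-1} := 0. -/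
/-- The Apéry set of a KW semigroup H with respect to p is
{λq : 0 ≤ λ < p - y₁} ∪ ⋃ᵢ {hᵢ + λq : 0 ≤ λ < yᵢ - yᵢ₊₁}. -/
theorem stmt_3 (p q m : ℕ) (hp : 3 ≤ p) (hpq : p < q) (hcop : Nat.Coprime p q)
    (hm : 1 ≤ m) (x y : ℕ → ℕ)
    (hx1 : 0 < x 1) (hxmono : ∀ i, 1 ≤ i → i < m → x i < x (i + 1))
    (hxq : 2 * x m ≤ q)
    (hyp : 2 * y 1 ≤ p) (hymono : ∀ i, 1 ≤ i → i < m → y (i + 1) < y i)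
    (hym : 0 < y m) (hytop : y (m + 1) = 0)
    (h : ℕ → ℕ) (hh : ∀ i, 1 ≤ i → i ≤ m → h i + x i * p + y i * q = p * q)
    (H : Set ℕ)
    (hH : H = ↑(AddSubmonoid.closure ({p, q} : Set ℕ)) ∪
      {s | ∃ i a b, 1 ≤ i ∧ i ≤ m ∧ 1 ≤ a ∧ a ≤ x i ∧ 1 ≤ b ∧ b ≤ y i ∧
        s + a * p + b * q = p * q}) :
    {s | s ∈ H ∧ ∀ t ∈ H, t + p ≠ s} =
      {w | ∃ l, l < p - y 1 ∧ w = l * q} ∪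
      {w | ∃ i l, 1 ≤ i ∧ i ≤ m ∧ l < y i - y (i + 1) ∧ w = h i + l * q} := by
  have hp0 : 0 < p := by omega
  have hq0 : 0 < q := by omega
  -- closure membership characterization
  have hclos : ∀ s : ℕ, s ∈ (AddSubmonoid.closure ({p, q} : Set ℕ) : Set ℕ) ↔
      ∃ α β : ℕ, s = α * p + β * q := by
    intro s
    rw [SetLike.mem_coe, AddSubmonoid.mem_closure_pair]
    constructor
    · rintro ⟨a, b, hab⟩
      exact ⟨a, b, by simp [← hab, smul_eq_mul]⟩
    · rintro ⟨a, b, hab⟩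
      exact ⟨a, b, by simp [hab, smul_eq_mul]⟩
  -- monotonicity of x
  have xmono : ∀ j, j ≤ m → ∀ i, 1 ≤ i → i ≤ j → x i ≤ x j := by
    intro j
    induction j with
    | zero => intro _ i hi hij; omega
    | succ k ih =>
      intro hk i hi hij
      rcases Nat.lt_or_ge i (k + 1) with hlt | hge
      · have h1 : x i ≤ x k := ih (by omega) i hi (by omega)
        have h2 : x k < x (k + 1) := hxmono k (by omega) (by omega)
        omega
      · have : i = k + 1 := by omega
        subst this; exact le_rfl
  -- antitonicity of y
  have yanti : ∀ j, j ≤ m → ∀ i, 1 ≤ i → i ≤ j → y j ≤ y i := by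
    intro j
    induction j with
    | zero => intro _ i hi hij; omega
    | succ k ih =>
      intro hk i hi hij
      rcases Nat.lt_or_ge i (k + 1) with hlt | hge
      · have h1 : y k ≤ y i := ih (by omega) i hi (by omega)
        have h2 : y (k + 1) < y k := hymono k (by omega) (by omega)
        omega
      · have : i = k + 1 := by omega
        subst this; exact le_rfl
  have xpos : ∀ i, 1 ≤ i → i ≤ m → 1 ≤ x i := fun i hi him =>
    le_trans hx1 (xmono m le_rfl 1 le_rfl (by omega) |>.trans (le_refl _) |> fun _ =>
      xmono i him 1 le_rfl hi)
  have ypos : ∀ i, 1 ≤ i → i ≤ m → 1 ≤ y i := fun i hi him =>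
    le_trans hym (yanti m le_rfl i hi him)
  have yle1 : ∀ i, 1 ≤ i → i ≤ m → y i ≤ y 1 := fun i hi him =>
    yanti i him 1 le_rfl hi
  have xlem : ∀ i, 1 ≤ i → i ≤ m → x i ≤ x m := fun i hi him =>
    xmono m le_rfl i hi him
  -- existence of the "pivot" index for a given b
  have exi0 : ∀ b, 1 ≤ b → b ≤ y 1 → ∃ i, 1 ≤ i ∧ i ≤ m ∧ y (i + 1) < b ∧ b ≤ y i := by
    intro b hb hb1
    classical
    set i0 := Nat.findGreatest (fun i => b ≤ y i) m with hi0def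
    have h1 : 1 ≤ i0 := Nat.le_findGreatest hm hb1
    have h2 : i0 ≤ m := Nat.findGreatest_le m
    have h3 : b ≤ y i0 := Nat.findGreatest_spec (P := fun i => b ≤ y i) hm hb1
    refine ⟨i0, h1, h2, ?_, h3⟩
    rcases Nat.eq_or_lt_of_le h2 with heq | hlt
    · rw [heq, hytop]; omega
    · have := Nat.findGreatest_is_greatest (P := fun i => b ≤ y i)
        (n := m) (k := i0 + 1) (by omega) (by omega)
      omega
  -- if b ≤ y j and y (i+1) < b then j ≤ i
  have jlei : ∀ i j b, 1 ≤ j → j ≤ m → i ≤ m → y (i + 1) < b → b ≤ y j → j ≤ i := by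
    intro i j b hj hjm him hib hbj
    by_contra hcon
    push_neg at hcon
    have : y j ≤ y (i + 1) := yanti j hjm (i + 1) (by omega) (by omega)
    omega
  -- the key inequality: (a)*p + b*q ≤ p*q when 2*a ≤ q and 2*b ≤ p
  have keyineq : ∀ a b : ℕ, 2 * a ≤ q → 2 * b ≤ p → a * p + b * q ≤ p * q := by
    intro a b ha hb
    have h1 : (2 * a) * p ≤ q * p := Nat.mul_le_mul_right p ha
    have h2 : (2 * b) * q ≤ p * q := Nat.mul_le_mul_right q hb
    have h3 : 2 * (a * p + b * q) ≤ 2 * (p * q) := by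
      calc 2 * (a * p + b * q) = (2 * a) * p + (2 * b) * q := by ring
        _ ≤ q * p + p * q := Nat.add_le_add h1 h2
        _ = 2 * (p * q) := by ring
    omega
  subst hH
  ext s
  simp only [Set.mem_setOf_eq, Set.mem_union]
  constructor
  · rintro ⟨hsH, hap⟩
    rcases hsH with hsc | ⟨i, a, b, hi1, him, ha1, hax, hb1, hby, heq⟩
    · -- s ∈ ⟨p, q⟩
      rw [hclos] at hsc
      obtain ⟨α, β, rfl⟩ := hsc
      -- α must be 0
      have hα : α = 0 := by
        by_contra hα0
        have : α - 1 ≥ 0 := by omega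
        exact hap ((α - 1) * p + β * q)
          (Or.inl ((hclos _).mpr ⟨α - 1, β, rfl⟩))
          (by have h1 : α - 1 + 1 = α := by omega
              have h2 : (α - 1 + 1) * p = (α - 1) * p + p := by ring
              rw [h1] at h2
              omega)
      subst hα
      simp only [Nat.zero_mul, Nat.zero_add]
      -- now s = β * q ; show β < p - y 1
      left
      refine ⟨β, ?_, rfl⟩
      by_contra hβ
      push_neg at hβ
      rcases Nat.lt_or_ge β p with hβp | hβp
      · -- p - y 1 ≤ β < p : use the extra part
        set b := p - β with hbdef
        have hb1 : 1 ≤ b := by omega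
        have hby1 : b ≤ y 1 := by omega
        obtain ⟨i, hi1, him, hlow, hhigh⟩ := exi0 b hb1 hby1
        have hx_i : 1 ≤ x i := le_trans hx1 (xmono i him 1 le_rfl hi1)
        -- t = p*q - p - b*q
        have hble : 1 * p + b * q ≤ p * q := by
          apply keyineq
          · have := xpos i hi1 him
            have := xlem i hi1 him
            omega
          · omega
        set t := p * q - 1 * p - b * q with htdef
        have hteq : t + 1 * p + b * q = p * q := by omega
        refine hap t (Or.inr ⟨i, 1, b, hi1, him, le_rfl, hx_i, hb1, hhigh, hteq⟩) ?_
        -- t + p = β * q, i.e. t + p + b * q = p * q = (β + b) * q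
        have hpq' : (β + b) * q = p * q := by
          have : β + b = p := by omega
          rw [this]
        have : β * q + b * q = p * q := by rw [← Nat.add_mul]; exact hpq'
        omega
      · -- β ≥ p
        refine hap ((q - 1) * p + (β - p) * q)
          (Or.inl ((hclos _).mpr ⟨q - 1, β - p, rfl⟩)) ?_
        have e1 : (q - 1) * p + p = q * p := by
          have h1 : q - 1 + 1 = q := by omega
          have h2 : (q - 1 + 1) * p = (q - 1) * p + p := by ring
          rw [h1] at h2
          omega
        have e2 : (β - p) * q + p * q = β * q := by
          have h1 : β - p + p = β := by omega
          have h2 : (β - p + p) * q = (β - p) * q + p * q := by ring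
          rw [h1] at h2
          omega
        have e3 : q * p = p * q := Nat.mul_comm q p
        omega
    · -- s in the extra part
      right
      have hbley1 : b ≤ y 1 := le_trans hby (yle1 i hi1 him)
      obtain ⟨i0, hi01, hi0m, hlow, hhigh⟩ := exi0 b hb1 hbley1
      have hile : i ≤ i0 := jlei i0 i b hi1 him hi0m hlow hby
      have haxle : a ≤ x i0 := le_trans hax (xmono i0 hi0m i hi1 hile)
      -- a must equal x i0
      have ha : a = x i0 := by
        by_contra hane
        have halt : a + 1 ≤ x i0 := by omega
        -- t = s - p ∈ H via (i0, a+1, b)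
        have hble : (a + 1) * p + b * q ≤ p * q := by
          apply keyineq
          · have := xlem i0 hi01 hi0m; omega
          · omega
        set t := p * q - (a + 1) * p - b * q with htdef
        have hteq : t + (a + 1) * p + b * q = p * q := by omega
        refine hap t (Or.inr ⟨i0, a + 1, b, hi01, hi0m, by omega, halt, hb1, hhigh, hteq⟩) ?_
        -- t + p = s since s + a*p + b*q = p*q and t + (a+1)*p + b*q = p*q
        have : (a + 1) * p = a * p + p := by ring
        omega
      subst ha
      refine ⟨i0, y i0 - b, hi01, hi0m, by omega, ?_⟩
      -- s = h i0 + (y i0 - b) * q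
      have hh0 := hh i0 hi01 hi0m
      have hsplit : (y i0 - b) * q + b * q = y i0 * q := by
        rw [← Nat.add_mul]
        congr 1
        omega
      omega
  · -- backward direction
    rintro (⟨l, hl, rfl⟩ | ⟨i, l, hi1, him, hl, rfl⟩)
    · -- s = l * q
      have hy1pos : 1 ≤ y 1 := le_trans (ypos m (by omega) le_rfl) (yle1 m (by omega) le_rfl)
      constructor
      · exact Or.inl ((hclos _).mpr ⟨0, l, by ring⟩)
      · rintro t (htc | ⟨j, a, b, hj1, hjm, ha1, hax, hb1, hby, hteq⟩) habs
        · rw [hclos] at htc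
          obtain ⟨α, β, rfl⟩ := htc
          -- α*p + β*q + p = l*q
          have hβl : β < l := by
            by_contra hcon
            push_neg at hcon
            have : l * q ≤ β * q := Nat.mul_le_mul_right q hcon
            omega
          have hsplit : (l - β) * q + β * q = l * q := by
            rw [← Nat.add_mul]; congr 1; omega
          have hdvd : p ∣ (l - β) * q := ⟨α + 1, by
            have h4 : p * (α + 1) = α * p + p := by ring
            omega⟩
          have hdl : p ∣ (l - β) := hcop.dvd_of_dvd_mul_right hdvd
          have : p ≤ l - β := Nat.le_of_dvd (by omega) hdl
          omega
        · -- t from extra part: t + a*p + b*q = p*q, t + p = l*q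
          have hbley1 : b ≤ y 1 := le_trans hby (yle1 j hj1 hjm)
          -- (l + b) * q + a * p = p * q + p
          have he : (l + b) * q + a * p = p * q + p := by
            have : (l + b) * q = l * q + b * q := by ring
            omega
          have haq : a ≤ q + 1 := by
            by_contra hcon
            push_neg at hcon
            have : (q + 2) * p ≤ a * p := Nat.mul_le_mul_right p (by omega)
            have h2p : p * q + p < (q + 2) * p := by
              have : (q + 2) * p = p * q + 2 * p := by ring
              omega
            omega
          have hdvd : p ∣ (l + b) * q := ⟨q + 1 - a, by
            have h1 : p * (q + 1 - a) + p * a = p * (q + 1) := by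
              rw [← Nat.mul_add]; congr 1; omega
            have h2 : p * (q + 1) = p * q + p := by ring
            have h3 : p * a = a * p := Nat.mul_comm _ _
            omega⟩
          have hdl : p ∣ (l + b) := hcop.dvd_of_dvd_mul_right hdvd
          have : p ≤ l + b := Nat.le_of_dvd (by omega) hdl
          omega
    · -- s = h i + l * q
      have hh0 := hh i hi1 him
      have hyipos : 1 ≤ y i := ypos i hi1 him
      have hxipos : 1 ≤ x i := le_trans hx1 (xmono i him 1 le_rfl hi1)
      have hylow : y (i + 1) < y i - l := by omega
      set b := y i - l with hbdef
      have hb1 : 1 ≤ b := by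
        have : y (i + 1) ≥ 0 := Nat.zero_le _
        omega
      have hbley : b ≤ y i := by omega
      have hbley1 : b ≤ y 1 := le_trans hbley (yle1 i hi1 him)
      have hsq : (h i + l * q) + x i * p + b * q = p * q := by
        have hsplit : l * q + b * q = y i * q := by
          rw [← Nat.add_mul]; congr 1; omega
        omega
      constructor
      · exact Or.inr ⟨i, x i, b, hi1, him, hxipos, le_rfl, hb1, hbley, hsq⟩
      · rintro t (htc | ⟨j, a', b', hj1, hjm, ha1, hax, hb1', hby', hteq⟩) habs
        · rw [hclos] at htc
          obtain ⟨α, β, rfl⟩ := htc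
          -- (α + 1 + x i)*p + (β + b)*q = p*q
          have he : (α + 1 + x i) * p + (β + b) * q = p * q := by
            have e1 : (α + 1 + x i) * p = α * p + p + x i * p := by ring
            have e2 : (β + b) * q = β * q + b * q := by ring
            omega
          have hc1 : (α + 1 + x i) * p ≤ p * q := by omega
          have hcle : α + 1 + x i ≤ q := by
            by_contra hcon
            push_neg at hcon
            have : (q + 1) * p ≤ (α + 1 + x i) * p := Nat.mul_le_mul_right p (by omega)
            have : p * q < (q + 1) * p := by
              have : (q + 1) * p = p * q + p := by ring
              omega
            omega
          have hdvd : p ∣ (β + b) * q := ⟨q - (α + 1 + x i), by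
            have h1 : p * (q - (α + 1 + x i)) + p * (α + 1 + x i) = p * q := by
              rw [← Nat.mul_add]; congr 1; omega
            have h3 : p * (α + 1 + x i) = (α + 1 + x i) * p := Nat.mul_comm _ _
            omega⟩
          have hdl : p ∣ (β + b) := hcop.dvd_of_dvd_mul_right hdvd
          have hple : p ≤ β + b := Nat.le_of_dvd (by omega) hdl
          have hge : p * q ≤ (β + b) * q := Nat.mul_le_mul_right q hple
          have hpos : 0 < (α + 1 + x i) * p := by positivity
          omega
        · -- t from extra part
          have hbley1' : b' ≤ y 1 := le_trans hby' (yle1 j hj1 hjm)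
          -- (1 + x i)*p + b*q = a'*p + b'*q
          have he : (1 + x i) * p + b * q = a' * p + b' * q := by
            have e1 : (1 + x i) * p = p + x i * p := by ring
            omega
          have hbb : b' = b := by
            rcases Nat.lt_or_ge b' b with hlt | hge
            · -- b' < b : a'*p = (1+x i)*p + (b - b')*q
              exfalso
              have hsplit : (b - b') * q + b' * q = b * q := by
                rw [← Nat.add_mul]; congr 1; omega
              have hdvd : p ∣ (b - b') * q := by
                have hle : (1 + x i) * p ≤ a' * p := by omega
                have : 1 + x i ≤ a' := Nat.le_of_mul_le_mul_right hle hp0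
                refine ⟨a' - (1 + x i), ?_⟩
                have h1 : p * (a' - (1 + x i)) + p * (1 + x i) = p * a' := by
                  rw [← Nat.mul_add]; congr 1; omega
                have h2 : p * (1 + x i) = (1 + x i) * p := Nat.mul_comm _ _
                have h3 : p * a' = a' * p := Nat.mul_comm _ _
                omega
              have hdl : p ∣ (b - b') := hcop.dvd_of_dvd_mul_right hdvd
              have : p ≤ b - b' := Nat.le_of_dvd (by omega) hdl
              omega
            · rcases Nat.eq_or_lt_of_le hge with heq | hlt
              · omega
              · -- b < b' : (b' - b)*q = (1 + x i)*p - a'*p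
                exfalso
                have hsplit : (b' - b) * q + b * q = b' * q := by
                  rw [← Nat.add_mul]; congr 1; omega
                have hdvd : p ∣ (b' - b) * q := by
                  have hle : a' * p ≤ (1 + x i) * p := by omega
                  have : a' ≤ 1 + x i := Nat.le_of_mul_le_mul_right hle hp0
                  refine ⟨1 + x i - a', ?_⟩
                  have h1 : p * (1 + x i - a') + p * a' = p * (1 + x i) := by
                    rw [← Nat.mul_add]; congr 1; omega
                  have h2 : p * (1 + x i) = (1 + x i) * p := Nat.mul_comm _ _
                  have h3 : p * a' = a' * p := Nat.mul_comm _ _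
                  omega
                have hdl : p ∣ (b' - b) := hcop.dvd_of_dvd_mul_right hdvd
                have : p ≤ b' - b := Nat.le_of_dvd (by omega) hdl
                omega
          subst hbb
          have ha' : a' = 1 + x i := by
            have : a' * p = (1 + x i) * p := by omega
            exact Nat.eq_of_mul_eq_mul_right hp0 this
          -- b' ≤ y j and y (i+1) < b' gives j ≤ i, so x j ≤ x i < a'
          have hji : j ≤ i := jlei i j b hj1 hjm him (by omega) hby'
          have : x j ≤ x i := xmono i him j hj1 hji
          omega
end

section
/- Let S be a numerical semigroup with multiplicity m and Apéry set {a_0 = 0, a_1, …, a_{m-1}} with a_i ≡ i (mod m). Define a partial order on Z/mZ by i ⪯ j iff a_j - a_i ∈ S. Then j covers i in this poset if and only if a_j - a_i is a minimal generator of S (i.e., a_j - a_i ∈ S and a_j - a_i is not a sum of two nonzero elements of S). -/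
/-- In the Apéry poset of a numerical semigroup S of multiplicity m
(on ℤ/mℤ, with i ⪯ j iff a_j - a_i ∈ S), j covers i if and only if a_j - a_i
is a minimal generator of S. -/
theorem stmt_5 (S : AddSubmonoid ℕ) (hfin : {n : ℕ | n ∉ S}.Finite)
    (m : ℕ) (hm0 : 0 < m) (hmS : m ∈ S) (hmin : ∀ s ∈ S, s ≠ 0 → m ≤ s)
    (a : ZMod m → ℕ) (ha0 : a 0 = 0)
    (haS : ∀ i, a i ∈ S) (hacong : ∀ i, (a i : ZMod m) = i)
    (hamin : ∀ i, ∀ t ∈ S, (t : ZMod m) = i → a i ≤ t)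
    (i j : ZMod m) :
    ((∃ s ∈ S, s ≠ 0 ∧ a i + s = a j) ∧
      ¬ ∃ k : ZMod m, (∃ s ∈ S, s ≠ 0 ∧ a i + s = a k) ∧
        (∃ s ∈ S, s ≠ 0 ∧ a k + s = a j)) ↔
    (∃ s ∈ S, a i + s = a j ∧ s ≠ 0 ∧
      ¬ ∃ u ∈ S, ∃ v ∈ S, u ≠ 0 ∧ v ≠ 0 ∧ u + v = s) := by
  haveI : NeZero m := ⟨hm0.ne'⟩
  constructor
  · rintro ⟨⟨s, hs, hs0, hadd⟩, hnc⟩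
    refine ⟨s, hs, hadd, hs0, ?_⟩
    rintro ⟨u, hu, v, hv, hu0, hv0, huv⟩
    set k : ZMod m := i + (u : ZMod m) with hk
    have hmem : a i + u ∈ S := S.add_mem (haS i) hu
    have hcast : ((a i + u : ℕ) : ZMod m) = k := by
      push_cast
      rw [hacong i]
    have hle : a k ≤ a i + u := hamin k _ hmem hcast
    have hdvd : m ∣ (a i + u - a k) := by
      have h0 : ((a i + u - a k : ℕ) : ZMod m) = 0 := by
        rw [Nat.cast_sub hle, hcast, hacong k, sub_self]
      exact (ZMod.natCast_eq_zero_iff _ _).mp h0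
    obtain ⟨t, ht⟩ := hdvd
    rcases Nat.eq_zero_or_pos t with ht0 | ht1
    · rw [ht0, mul_zero] at ht
      have heq : a i + u = a k := by omega
      exact hnc ⟨k, ⟨u, hu, hu0, heq⟩, ⟨v, hv, hv0, by omega⟩⟩
    · -- a j - m ∈ S, contradiction with minimality of a j
      obtain ⟨n, rfl⟩ : ∃ n, t = n + 1 := ⟨t - 1, by omega⟩
      have hts : m * (n + 1) = m * n + m := by ring
      have hmt : m * n ∈ S := by
        simpa [smul_eq_mul, mul_comm] using AddSubmonoid.nsmul_mem S hmS n
      have hmem2 : a k + m * n + v ∈ S := S.add_mem (S.add_mem (haS k) hmt) hv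
      have hj : a j = a k + m * n + m + v := by omega
      have hjm : m ≤ a j := by omega
      have heq2 : a j - m = a k + m * n + v := by omega
      have hcast2 : ((a j - m : ℕ) : ZMod m) = j := by
        rw [Nat.cast_sub hjm, ZMod.natCast_self, sub_zero, hacong]
      have := hamin j (a j - m) (heq2 ▸ hmem2) hcast2
      omega
  · rintro ⟨s, hs, hadd, hs0, hmin'⟩
    refine ⟨⟨s, hs, hs0, hadd⟩, ?_⟩
    rintro ⟨k, ⟨u, hu, hu0, hku⟩, ⟨v, hv, hv0, hkv⟩⟩
    exact hmin' ⟨u, hu, v, hv, hu0, hv0, by omega⟩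
end

section
/- Suppose H ∈ KW(p,q) of embedding dimension n has PF(H) = {z + k, z + 2k, …, z + (n-1)k} for some integers z ≥ 0 and k > 0 (an arithmetic progression). Then there exist positive integers x, y with (n-2)x ≤ q/2 and (n-2)y ≤ p/2 such that x_i = ix and y_i = (n-1-i)y for all 1 ≤ i ≤ n-2; i.e., H ∈ KW_D(p,q). -/
lemma aux_not_rep (p q : ℕ) (hcop : Nat.Coprime p q) (hq : 0 < q)
    (n a b : ℕ) (ha : 1 ≤ a) (hb : 1 ≤ b) (heq : n + a*p + b*q = p*q) :
    ∀ u v : ℕ, n ≠ u*p + v*q := by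
  intro u v hn
  subst hn
  have h2 : (u+a)*p + (v+b)*q = p*q := by rw [add_mul, add_mul]; omega
  have h3 : (v+b)*q ≤ p*q := by omega
  have h4 : (u+a)*p = q * (p - (v+b)) := by
    rw [Nat.mul_sub, Nat.mul_comm q p, Nat.mul_comm q (v+b)]; omega
  have h5 : q ∣ (u+a)*p := ⟨p - (v+b), h4⟩
  have h6 : q ∣ u + a := (Nat.Coprime.dvd_of_dvd_mul_right hcop.symm h5)
  have h7 : q ≤ u + a := Nat.le_of_dvd (by omega) h6
  have h8 : q*p ≤ (u+a)*p := Nat.mul_le_mul_right p h7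
  have h9 : q*p = p*q := Nat.mul_comm q p
  have h10 : 1*q ≤ (v+b)*q := Nat.mul_le_mul_right q (by omega)
  omega

lemma aux_rep (p q : ℕ) (hcop : Nat.Coprime p q) (hp : 0 < p) (hq : 0 < q)
    (n : ℕ) (h : ∀ u v : ℕ, n ≠ u*p + v*q) :
    ∃ a b : ℕ, 1 ≤ a ∧ 1 ≤ b ∧ n + a*p + b*q = p*q := by
  haveI : NeZero q := ⟨hq.ne'⟩
  set t : ZMod q := (n : ZMod q) * ((ZMod.unitOfCoprime p hcop)⁻¹ : (ZMod q)ˣ) with ht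
  set u : ℕ := t.val with hu
  have hult : u < q := ZMod.val_lt t
  have htc : ((u : ℕ) : ZMod q) = t := ZMod.natCast_zmod_val t
  have hup : ((u * p : ℕ) : ZMod q) = (n : ZMod q) := by
    push_cast
    rw [htc, ht, mul_assoc]
    have : ((ZMod.unitOfCoprime p hcop : (ZMod q)ˣ) : ZMod q) = (p : ZMod q) :=
      ZMod.coe_unitOfCoprime p hcop
    rw [← this, ← Units.val_mul, inv_mul_cancel, Units.val_one, mul_one]
  have hdvd : (q : ℤ) ∣ ((u * p : ℕ) : ℤ) - (n : ℤ) := by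
    rw [← ZMod.intCast_zmod_eq_zero_iff_dvd]
    push_cast
    rw [← Nat.cast_mul, hup]
    ring
  obtain ⟨w, hw⟩ := hdvd
  have hw1 : 1 ≤ w := by
    rcases Int.lt_or_le w 1 with hw0 | h1
    · exfalso
      have hwle : w ≤ 0 := by omega
      have : (n : ℤ) = (u : ℤ) * p + ((-w).toNat : ℤ) * q := by
        rw [Int.toNat_of_nonneg (by omega)]
        push_cast at hw ⊢
        linarith
      exact h u (-w).toNat (by exact_mod_cast this)
    · exact h1
  refine ⟨q - u, w.toNat, by omega, by omega, ?_⟩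
  have hmain : (n : ℤ) + ((q : ℤ) - u) * p + w * q = p * q := by
    push_cast at hw ⊢
    linarith
  have h2 : (n : ℤ) + ((q - u : ℕ) : ℤ) * p + ((w.toNat : ℤ)) * q = ((p*q : ℕ) : ℤ) := by
    rw [Int.toNat_of_nonneg (by omega), Nat.cast_sub hult.le]
    push_cast
    linarith
  exact_mod_cast h2

lemma aux_unique (p q : ℕ) (hcop : Nat.Coprime p q) (hp : 0 < p) (hq : 0 < q)
    (n a b a' b' : ℕ) (ha : a < q) (ha' : a' < q)
    (h1 : n + a*p + b*q = p*q) (h2 : n + a'*p + b'*q = p*q) : a = a' ∧ b = b' := by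
  have key : ∀ c d c' d' : ℕ, c ≤ c' → c' < q → c*p + d*q = c'*p + d'*q → c = c' ∧ d = d' := by
    intro c d c' d' hcc hcq he
    have hcp : c*p ≤ c'*p := Nat.mul_le_mul_right p hcc
    have hdq : d'*q ≤ d*q := by omega
    have hsub : (c' - c)*p = (d - d')*q := by rw [Nat.sub_mul, Nat.sub_mul]; omega
    have hdvd : q ∣ (c' - c)*p := ⟨d - d', by rw [hsub, Nat.mul_comm]⟩
    have h6 : q ∣ c' - c := Nat.Coprime.dvd_of_dvd_mul_right hcop.symm hdvd
    have h7 : c' - c = 0 := Nat.eq_zero_of_dvd_of_lt h6 (by omega)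
    have hc : c = c' := by omega
    subst hc
    have hd : d*q = d'*q := by omega
    exact ⟨rfl, Nat.eq_of_mul_eq_mul_right hq hd⟩
  rcases Nat.le_total a a' with hle | hle
  · exact key a b a' b' hle ha' (by omega)
  · have := key a' b' a b hle ha (by omega)
    exact ⟨this.1.symm, this.2.symm⟩

set_option maxHeartbeats 2000000 in
/-- If a KW semigroup H of embedding dimension n = m + 2 has
PF(H) = {z + k, z + 2k, …, z + (n-1)k} for some z ≥ 0 and k > 0, then there are
positive integers x, y with (n-2)x ≤ q/2 and (n-2)y ≤ p/2 such that
x_i = i·x and y_i = (n-1-i)·y for all i, i.e. H ∈ KW_D(p,q). -/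
theorem stmt_11 (p q m : ℕ) (hp : 3 ≤ p) (hpq : p < q) (hcop : Nat.Coprime p q)
    (hm : 1 ≤ m) (x y : ℕ → ℕ)
    (hx1 : 0 < x 1) (hxmono : ∀ i, 1 ≤ i → i < m → x i < x (i + 1))
    (hxq : 2 * x m ≤ q)
    (hyp : 2 * y 1 ≤ p) (hymono : ∀ i, 1 ≤ i → i < m → y (i + 1) < y i)
    (hym : 0 < y m)
    (H : Set ℕ)
    (hH : H = ↑(AddSubmonoid.closure ({p, q} : Set ℕ)) ∪
      {s | ∃ i a b, 1 ≤ i ∧ i ≤ m ∧ 1 ≤ a ∧ a ≤ x i ∧ 1 ≤ b ∧ b ≤ y i ∧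
        s + a * p + b * q = p * q})
    (z k : ℕ) (hk : 0 < k)
    (hPF : {f : ℕ | f ∉ H ∧ ∀ s ∈ H, s ≠ 0 → f + s ∈ H} =
      {f : ℕ | ∃ i, 1 ≤ i ∧ i ≤ m + 1 ∧ f = z + i * k}) :
    ∃ X Y : ℕ, 0 < X ∧ 0 < Y ∧ 2 * (m * X) ≤ q ∧ 2 * (m * Y) ≤ p ∧
      ∀ i, 1 ≤ i → i ≤ m → x i = i * X ∧ y i = (m + 1 - i) * Y := by
  have hq0 : 0 < q := by omega
  have hp0 : 0 < p := by omega
  -- monotonicity helpers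
  have hxle : ∀ j, 1 ≤ j → j ≤ m → ∀ i, 1 ≤ i → i ≤ j → x i ≤ x j := by
    intro j
    induction j with
    | zero => omega
    | succ n ih =>
      intro _ hjm i hi hij
      rcases Nat.eq_or_lt_of_le hij with he | hlt
      · rw [he]
      · have hn1 : 1 ≤ n := by omega
        have h1 : x i ≤ x n := ih hn1 (by omega) i hi (by omega)
        have h2 : x n < x (n+1) := hxmono n hn1 (by omega)
        omega
  have hyge : ∀ j, 1 ≤ j → j ≤ m → ∀ i, 1 ≤ i → i ≤ j → y j ≤ y i := by
    intro j
    induction j with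
    | zero => omega
    | succ n ih =>
      intro _ hjm i hi hij
      rcases Nat.eq_or_lt_of_le hij with he | hlt
      · rw [he]
      · have hn1 : 1 ≤ n := by omega
        have h1 : y n ≤ y i := ih hn1 (by omega) i hi (by omega)
        have h2 : y (n+1) < y n := hymono n hn1 (by omega)
        omega
  have hxlt : ∀ i j, 1 ≤ i → i < j → j ≤ m → x i < x j := by
    intro i j h1 h2 h3
    have h4 : x i ≤ x (j-1) := hxle (j-1) (by omega) (by omega) i h1 (by omega)
    have h5 := hxmono (j-1) (by omega) (by omega)
    have h6 : j - 1 + 1 = j := by omega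
    rw [h6] at h5
    omega
  have hylt : ∀ i j, 1 ≤ i → i < j → j ≤ m → y j < y i := by
    intro i j h1 h2 h3
    have h4 : y (j-1) ≤ y i := hyge (j-1) (by omega) (by omega) i h1 (by omega)
    have h5 := hymono (j-1) (by omega) (by omega)
    have h6 : j - 1 + 1 = j := by omega
    rw [h6] at h5
    omega
  have hypos : ∀ i, 1 ≤ i → i ≤ m → 1 ≤ y i := by
    intro i h1 h2
    have := hyge m hm le_rfl i h1 h2
    omega
  have hxpos : ∀ i, 1 ≤ i → i ≤ m → 1 ≤ x i := by
    intro i h1 h2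
    have := hxle i h1 h2 1 le_rfl h1
    omega
  have hxmQ : x m < q := by omega
  -- primed sequences
  obtain ⟨x', hx'0, hx'eq⟩ : ∃ x' : ℕ → ℕ, x' 0 = 0 ∧ ∀ j, 1 ≤ j → x' j = x j :=
    ⟨fun j => if j = 0 then 0 else x j, by simp, fun j hj => by
      simp [Nat.one_le_iff_ne_zero.mp hj]⟩
  obtain ⟨y', hy'eq, hy'0⟩ : ∃ y' : ℕ → ℕ, (∀ j, j ≤ m → y' j = y j) ∧ ∀ j, m < j → y' j = 0 :=
    ⟨fun j => if j ≤ m then y j else 0, fun j hj => by simp [hj], fun j hj => by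
      simp [Nat.not_le.mpr hj]⟩
  have hx'lt : ∀ j j', j < j' → j' ≤ m → x' j < x' j' := by
    intro j j' h1 h2
    rcases Nat.eq_zero_or_pos j with h0 | h0
    · subst h0
      rw [hx'0, hx'eq j' (by omega)]
      exact lt_of_lt_of_le hx1 (hxle j' (by omega) h2 1 le_rfl (by omega))
    · rw [hx'eq j h0, hx'eq j' (by omega)]
      exact hxlt j j' h0 h1 h2
  have hy'lt : ∀ j j', 1 ≤ j → j < j' → j' ≤ m+1 → y' j' < y' j := by
    intro j j' h1 h2 h3
    have hjm : j ≤ m := by omega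
    rw [hy'eq j hjm]
    rcases Nat.lt_or_ge j' (m+1) with h4 | h4
    · rw [hy'eq j' (by omega)]
      exact hylt j j' h1 h2 (by omega)
    · rw [hy'0 j' (by omega)]
      exact hypos j h1 hjm
  have hx'top : ∀ j, j ≤ m → x' j ≤ x m := by
    intro j hj
    rcases Nat.eq_zero_or_pos j with h0 | h0
    · rw [h0, hx'0]; omega
    · rw [hx'eq j h0]
      exact hxle m hm le_rfl j h0 hj
  -- membership helpers
  have hmemS : ∀ u v : ℕ, (u*p + v*q) ∈ H := by
    intro u v
    rw [hH]
    left
    have : (u*p + v*q) ∈ AddSubmonoid.closure ({p, q} : Set ℕ) := by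
      rw [AddSubmonoid.mem_closure_pair]
      exact ⟨u, v, by simp [smul_eq_mul]⟩
    exact this
  have hHp : p ∈ H := by have := hmemS 1 0; simpa using this
  have hHq : q ∈ H := by have := hmemS 0 1; simpa using this
  have hGap : ∀ n a b : ℕ, 1 ≤ a → a < q → 1 ≤ b → n + a*p + b*q = p*q → n ∈ H →
      ∃ i, 1 ≤ i ∧ i ≤ m ∧ a ≤ x i ∧ b ≤ y i := by
    intro n a b ha haq hb heq hn
    rw [hH] at hn
    rcases hn with hn | hn
    · exfalso
      have : n ∈ AddSubmonoid.closure ({p, q} : Set ℕ) := hn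
      rw [AddSubmonoid.mem_closure_pair] at this
      obtain ⟨u, v, huv⟩ := this
      exact aux_not_rep p q hcop hq0 n a b ha hb heq u v
        (by simpa [smul_eq_mul] using huv.symm)
    · obtain ⟨i, a', b', hi1, him, ha'1, ha'x, hb'1, hb'y, heq'⟩ := hn
      have ha'q : a' < q :=
        lt_of_le_of_lt (le_trans ha'x (hxle m hm le_rfl i hi1 him)) hxmQ
      obtain ⟨haa, hbb⟩ := aux_unique p q hcop hp0 hq0 n a b a' b' haq ha'q heq heq'
      exact ⟨i, hi1, him, haa ▸ ha'x, hbb ▸ hb'y⟩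
  have hGap' : ∀ n a b i : ℕ, 1 ≤ i → i ≤ m → 1 ≤ a → a ≤ x i → 1 ≤ b → b ≤ y i →
      n + a*p + b*q = p*q → n ∈ H := by
    intro n a b i h1 h2 h3 h4 h5 h6 h7
    rw [hH]
    right
    exact ⟨i, a, b, h1, h2, h3, h4, h5, h6, h7⟩
  -- corner lemma
  have hcorner : ∀ f, f ∉ H → f + p ∈ H → f + q ∈ H →
      ∃ j, j ≤ m ∧ f + (x' j + 1)*p + (y' (j+1) + 1)*q = p*q := by
    intro f hf hfp hfq
    have hrep : ∀ u v : ℕ, f ≠ u*p + v*q := by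
      intro u v he
      exact hf (he ▸ hmemS u v)
    obtain ⟨a, b, ha, hb, heq⟩ := aux_rep p q hcop hp0 hq0 f hrep
    have hbqq : 1*q ≤ b*q := Nat.mul_le_mul_right q hb
    have hap : 1*p ≤ a*p := Nat.mul_le_mul_right p ha
    have haq : a < q := by
      by_contra hc
      have h1 : q*p ≤ a*p := Nat.mul_le_mul_right p (by omega)
      have h9 : q*p = p*q := Nat.mul_comm q p
      omega
    have hbp : b < p := by
      by_contra hc
      have h1 : p*q ≤ b*q := Nat.mul_le_mul_right q (by omega)
      omega
    have C1 : ∀ i, 1 ≤ i → i ≤ m → ¬(a ≤ x i ∧ b ≤ y i) := by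
      rintro i h1 h2 ⟨hax, hby⟩
      exact hf (hGap' f a b i h1 h2 ha hax hb hby heq)
    have C2 : 2 ≤ a → ∃ i, 1 ≤ i ∧ i ≤ m ∧ a - 1 ≤ x i ∧ b ≤ y i := by
      intro ha2
      have heq2 : (f + p) + (a-1)*p + b*q = p*q := by rw [Nat.sub_mul]; omega
      exact hGap (f+p) (a-1) b (by omega) (by omega) hb heq2 hfp
    have C3 : 2 ≤ b → ∃ i, 1 ≤ i ∧ i ≤ m ∧ a ≤ x i ∧ b - 1 ≤ y i := by
      intro hb2
      have heq3 : (f + q) + a*p + (b-1)*q = p*q := by rw [Nat.sub_mul]; omega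
      exact hGap (f+q) a (b-1) ha haq (by omega) heq3 hfq
    have hy11 : 1 ≤ y 1 := hypos 1 le_rfl hm
    by_cases ha1 : a = 1
    · have hge := C1 1 le_rfl hm
      have hbgt : ¬ b ≤ y 1 := fun hb' => hge ⟨by omega, hb'⟩
      have hb2 : 2 ≤ b := by omega
      obtain ⟨i2, hi21, hi2m, _, hby2⟩ := C3 hb2
      have hylei2 : y i2 ≤ y 1 := hyge i2 hi21 hi2m 1 le_rfl hi21
      have hbeq : b = y 1 + 1 := by omega
      refine ⟨0, by omega, ?_⟩
      rw [hx'0, hy'eq 1 hm]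
      rw [show (0:ℕ)+1 = a from by omega, show y 1 + 1 = b from hbeq.symm]
      exact heq
    · have ha2 : 2 ≤ a := by omega
      obtain ⟨i1, hi11, hi1m, hax1, hby1⟩ := C2 ha2
      by_cases hb1 : b = 1
      · have hxm := C1 m hm le_rfl
        have hnle : ¬ a ≤ x m := fun h => hxm ⟨h, by have := hypos m hm le_rfl; omega⟩
        have hxi1 : x i1 ≤ x m := hxle m hm le_rfl i1 hi11 hi1m
        have haeq : a = x m + 1 := by omega
        refine ⟨m, le_rfl, ?_⟩
        rw [hx'eq m hm, hy'0 (m+1) (by omega)]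
        rw [show x m + 1 = a from haeq.symm, show (0:ℕ)+1 = b from by omega]
        exact heq
      · have hb2 : 2 ≤ b := by omega
        obtain ⟨i2, hi21, hi2m, hax2, hby2⟩ := C3 hb2
        have hbne : ¬ b ≤ y i2 := fun h => (C1 i2 hi21 hi2m) ⟨hax2, h⟩
        have hbeq : b = y i2 + 1 := by omega
        have hi12 : i1 < i2 := by
          by_contra hc
          have : y i1 ≤ y i2 := hyge i1 hi11 hi1m i2 hi21 (by omega)
          omega
        have hi2m1 : 1 ≤ i2 - 1 := by omega
        have hxi : x i1 ≤ x (i2-1) := hxle (i2-1) hi2m1 (by omega) i1 hi11 (by omega)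
        have hyy : y i2 < y (i2-1) := hylt (i2-1) i2 hi2m1 (by omega) hi2m
        have hC := C1 (i2-1) hi2m1 (by omega)
        have hxlt2 : ¬ a ≤ x (i2-1) := fun h => hC ⟨h, by omega⟩
        have haeq : a = x (i2-1) + 1 := by omega
        refine ⟨i2-1, by omega, ?_⟩
        rw [show i2-1+1 = i2 from by omega, hx'eq (i2-1) hi2m1, hy'eq i2 hi2m,
          show x (i2-1) + 1 = a from haeq.symm, show y i2 + 1 = b from hbeq.symm]
        exact heq
  -- PF elements
  have hPFm : ∀ i, 1 ≤ i → i ≤ m+1 → (z + i*k) ∉ H ∧ ∀ s ∈ H, s ≠ 0 → z + i*k + s ∈ H := by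
    intro i h1 h2
    have hmem : (z + i*k) ∈ {f : ℕ | ∃ i, 1 ≤ i ∧ i ≤ m + 1 ∧ f = z + i * k} := ⟨i, h1, h2, rfl⟩
    rw [← hPF] at hmem
    exact hmem
  have hJex : ∀ i, ∃ j, 1 ≤ i → i ≤ m+1 →
      (j ≤ m ∧ z + i*k + (x' j + 1)*p + (y' (j+1)+1)*q = p*q) := by
    intro i
    by_cases hi : 1 ≤ i ∧ i ≤ m+1
    · obtain ⟨hnot, hadd⟩ := hPFm i hi.1 hi.2
      obtain ⟨j, hj, heq⟩ := hcorner (z+i*k) hnot (hadd p hHp (by omega)) (hadd q hHq (by omega))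
      exact ⟨j, fun _ _ => ⟨hj, heq⟩⟩
    · exact ⟨0, fun h1 h2 => absurd ⟨h1, h2⟩ hi⟩
  choose J hJ using hJex
  have hJinj : ∀ i, 1 ≤ i → i ≤ m+1 → ∀ i', 1 ≤ i' → i' ≤ m+1 → J i = J i' → i = i' := by
    intro i h1 h2 i' h1' h2' he
    have e1 := (hJ i h1 h2).2
    have e2 := (hJ i' h1' h2').2
    rw [he] at e1
    have hik : i*k = i'*k := by linarith
    exact Nat.eq_of_mul_eq_mul_right hk hik
  have hsurjJ : ∀ b ∈ Finset.Icc 0 m, ∃ a, ∃ _ : a ∈ Finset.Icc 1 (m+1), b = J a := by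
    apply Finset.surj_on_of_inj_on_of_card_le (fun a _ => J a)
    · intro a ha
      rw [Finset.mem_Icc] at ha ⊢
      exact ⟨Nat.zero_le _, (hJ a ha.1 ha.2).1⟩
    · intro a1 a2 ha1 ha2 he
      rw [Finset.mem_Icc] at ha1 ha2
      exact hJinj a1 ha1.1 ha1.2 a2 ha2.1 ha2.2 he
    · simp [Nat.card_Icc]
  have hTex : ∀ j, ∃ i, j ≤ m → (1 ≤ i ∧ i ≤ m+1 ∧ J i = j) := by
    intro j
    by_cases hj : j ≤ m
    · obtain ⟨i, hi, hji⟩ := hsurjJ j (Finset.mem_Icc.mpr ⟨Nat.zero_le _, hj⟩)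
      rw [Finset.mem_Icc] at hi
      exact ⟨i, fun _ => ⟨hi.1, hi.2, hji.symm⟩⟩
    · exact ⟨1, fun h => absurd h hj⟩
  choose T hT using hTex
  have hEqT : ∀ j, j ≤ m → 1 ≤ T j ∧ T j ≤ m+1 ∧
      z + (T j)*k + (x' j + 1)*p + (y' (j+1)+1)*q = p*q := by
    intro j hj
    obtain ⟨h1, h2, h3⟩ := hT j hj
    have := (hJ (T j) h1 h2).2
    rw [h3] at this
    exact ⟨h1, h2, this⟩
  have hsurjT : ∀ b ∈ Finset.Icc 1 (m+1), ∃ a, ∃ _ : a ∈ Finset.Icc 0 m, b = T a := by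
    apply Finset.surj_on_of_inj_on_of_card_le (fun a _ => T a)
    · intro a ha
      rw [Finset.mem_Icc] at ha ⊢
      have := hEqT a ha.2
      exact ⟨this.1, this.2.1⟩
    · intro a1 a2 ha1 ha2 he
      rw [Finset.mem_Icc] at ha1 ha2
      have e1 := (hT a1 ha1.2).2.2
      have e2 := (hT a2 ha2.2).2.2
      rw [← e1, ← e2, he]
    · simp [Nat.card_Icc]
  have hUex : ∀ s, ∃ j, 1 ≤ s → s ≤ m+1 → (j ≤ m ∧ T j = s) := by
    intro s
    by_cases hs : 1 ≤ s ∧ s ≤ m+1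
    · obtain ⟨j, hj, hjs⟩ := hsurjT s (Finset.mem_Icc.mpr hs)
      rw [Finset.mem_Icc] at hj
      exact ⟨j, fun _ _ => ⟨hj.2, hjs.symm⟩⟩
    · exact ⟨0, fun h1 h2 => absurd ⟨h1, h2⟩ hs⟩
  choose U hU using hUex
  -- pair relation
  have hpair : ∀ s, 1 ≤ s → s ≤ m →
      (k:ℤ) + ((x' (U (s+1)) : ℤ)+1)*p + ((y' (U (s+1)+1) : ℤ)+1)*q
        = ((x' (U s) : ℤ)+1)*p + ((y' (U s + 1) : ℤ)+1)*q := by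
    intro s h1 h2
    obtain ⟨hU1, hU2⟩ := hU s h1 (by omega)
    obtain ⟨hV1, hV2⟩ := hU (s+1) (by omega) (by omega)
    have e1 := (hEqT (U s) hU1).2.2
    have e2 := (hEqT (U (s+1)) hV1).2.2
    rw [hU2] at e1
    rw [hV2] at e2
    have e1' : (z:ℤ) + s*k + ((x' (U s):ℤ)+1)*p + ((y' (U s + 1):ℤ)+1)*q = (p:ℤ)*q := by
      exact_mod_cast e1
    have e2' : (z:ℤ) + (s+1)*k + ((x' (U (s+1)):ℤ)+1)*p + ((y' (U (s+1) + 1):ℤ)+1)*q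
        = (p:ℤ)*q := by exact_mod_cast e2
    linear_combination e2' - e1'
  have hUne : ∀ s, 1 ≤ s → s ≤ m → U (s+1) ≠ U s := by
    intro s h1 h2 he
    have e1 := (hU s h1 (by omega)).2
    have e2 := (hU (s+1) (by omega) (by omega)).2
    rw [he, e1] at e2
    omega
  have hUinj : ∀ s, 1 ≤ s → s ≤ m+1 → ∀ s', 1 ≤ s' → s' ≤ m+1 → U s = U s' → s = s' := by
    intro s h1 h2 s' h1' h2' he
    have e1 := (hU s h1 h2).2
    have e2 := (hU s' h1' h2').2
    rw [← e1, ← e2, he]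
  -- dichotomy
  have hdich : (∀ s, 1 ≤ s → s ≤ m → U (s+1) < U s) ∨ (∀ s, 1 ≤ s → s ≤ m → U s < U (s+1)) := by
    by_contra hcon
    push_neg at hcon
    obtain ⟨⟨s1, hs11, hs12, hB⟩, ⟨s2, hs21, hs22, hA⟩⟩ := hcon
    have hB' : U s1 < U (s1+1) := lt_of_le_of_ne hB (Ne.symm (hUne s1 hs11 hs12))
    have hA' : U (s2+1) < U s2 := lt_of_le_of_ne hA (hUne s2 hs21 hs22)
    have hUs1 : U s1 ≤ m := (hU s1 hs11 (by omega)).1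
    have hUs1' : U (s1+1) ≤ m := (hU (s1+1) (by omega) (by omega)).1
    have hUs2 : U s2 ≤ m := (hU s2 hs21 (by omega)).1
    have hUs2' : U (s2+1) ≤ m := (hU (s2+1) (by omega) (by omega)).1
    have eA := hpair s2 hs21 hs22
    have eB := hpair s1 hs11 hs12
    -- type A quantities
    have hDA1 : x' (U (s2+1)) < x' (U s2) := hx'lt _ _ hA' hUs2
    have hDAm : x' (U s2) ≤ x m := hx'top _ hUs2
    have hEA1 : y' (U s2 + 1) < y' (U (s2+1) + 1) := hy'lt _ _ (by omega) (by omega) (by omega)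
    have hDB1 : x' (U s1) < x' (U (s1+1)) := hx'lt _ _ hB' hUs1'
    have hDBm : x' (U (s1+1)) ≤ x m := hx'top _ hUs1'
    have hEB1 : y' (U (s1+1) + 1) < y' (U s1 + 1) := hy'lt _ _ (by omega) (by omega) (by omega)
    -- combine
    have hcomb : ((x' (U s2) : ℤ) - x' (U (s2+1)) + (x' (U (s1+1)) - x' (U s1))) * p
        = ((y' (U (s2+1) + 1) : ℤ) - y' (U s2 + 1) + (y' (U s1 + 1) - y' (U (s1+1) + 1))) * q := by
      linear_combination eB - eA
    have hqcop : IsCoprime (q:ℤ) (p:ℤ) := Nat.isCoprime_iff_coprime.mpr hcop.symm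
    have hdvd : (q:ℤ) ∣ ((x' (U s2) : ℤ) - x' (U (s2+1)) + (x' (U (s1+1)) - x' (U s1))) := by
      apply hqcop.dvd_of_dvd_mul_right
      exact ⟨((y' (U (s2+1) + 1) : ℤ) - y' (U s2 + 1) + (y' (U s1 + 1) - y' (U (s1+1) + 1))),
        by linear_combination hcomb⟩
    have hle1 : (q:ℤ) ≤ (x' (U s2) : ℤ) - x' (U (s2+1)) + (x' (U (s1+1)) - x' (U s1)) :=
      Int.le_of_dvd (by push_cast; omega) hdvd
    have hxq' : (2 * x m : ℤ) ≤ q := by exact_mod_cast hxq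
    -- forces extremes
    have hx'0z : (x' 0 : ℤ) = 0 := by exact_mod_cast hx'0
    have hforce : x' (U s2) = x m ∧ x' (U (s2+1)) = 0 ∧ x' (U (s1+1)) = x m ∧ x' (U s1) = 0 := by
      constructor
      · push_cast at hle1; omega
      constructor
      · push_cast at hle1; omega
      constructor
      · push_cast at hle1; omega
      · push_cast at hle1; omega
    obtain ⟨hf1, hf2, hf3, hf4⟩ := hforce
    have hxm : x' m = x m := hx'eq m hm
    have hUs2m : U s2 = m := by
      by_contra hc
      have := hx'lt (U s2) m (by omega) le_rfl
      omega
    have hUs1'm : U (s1+1) = m := by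
      by_contra hc
      have := hx'lt (U (s1+1)) m (by omega) le_rfl
      omega
    have hUs2'0 : U (s2+1) = 0 := by
      by_contra hc
      have h9 : x' (U (s2+1)) = x (U (s2+1)) := hx'eq _ (by omega)
      have := hxpos (U (s2+1)) (by omega) hUs2'
      omega
    have hUs10 : U s1 = 0 := by
      by_contra hc
      have h9 : x' (U s1) = x (U s1) := hx'eq _ (by omega)
      have := hxpos (U s1) (by omega) hUs1
      omega
    have h1 : s2 = s1 + 1 := by
      apply hUinj s2 hs21 (by omega) (s1+1) (by omega) (by omega)
      rw [hUs2m, hUs1'm]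
    have h2 : s2 + 1 = s1 := by
      apply hUinj (s2+1) (by omega) (by omega) s1 hs11 (by omega)
      rw [hUs2'0, hUs10]
    omega
  -- unified consequence: the consecutive-corner difference is a constant c
  obtain ⟨c, hcons⟩ : ∃ c : ℤ, ∀ l, l < m →
      ((x' (l+1):ℤ) - x' l)*p - ((y' (l+1):ℤ) - y' (l+2))*q = c := by
    rcases hdich with hA | hB
    · -- U strictly decreasing: U s = m+1-s
      have hupb : ∀ s, 1 ≤ s → s ≤ m+1 → U s + s ≤ m+1 := by
        intro s
        induction s with
        | zero => omega
        | succ n ih =>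
          intro _ h2
          by_cases hn : n = 0
          · subst hn
            have := (hU (0+1) (by omega) (by omega)).1
            omega
          · have h3 := ih (by omega) (by omega)
            have h4 := hA n (by omega) (by omega)
            omega
      have hdownb : ∀ d s, s + d = m+1 → 1 ≤ s → d ≤ U s := by
        intro d
        induction d with
        | zero => intro s _ _; omega
        | succ n ih =>
          intro s hs h1
          have h4 := hA s h1 (by omega)
          have h5 := ih (s+1) (by omega) (by omega)
          omega
      have hUval : ∀ s, 1 ≤ s → s ≤ m+1 → U s = m+1-s := by
        intro s h1 h2
        have := hupb s h1 h2
        have := hdownb (m+1-s) s (by omega) h1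
        omega
      refine ⟨k, ?_⟩
      intro l hl
      have h1 : 1 ≤ m - l := by omega
      have h2 : m - l ≤ m := by omega
      have e := hpair (m-l) h1 h2
      have eU1 : U (m-l) = l + 1 := by rw [hUval (m-l) h1 (by omega)]; omega
      have eU2 : U (m-l+1) = l := by rw [hUval (m-l+1) (by omega) (by omega)]; omega
      rw [eU1, eU2] at e
      linear_combination -e
    · -- U strictly increasing: U s = s-1
      have hupb : ∀ d s, s + d = m+1 → 1 ≤ s → U s + d ≤ m := by
        intro d
        induction d with
        | zero =>
          intro s hs h1
          have := (hU s h1 (by omega)).1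
          omega
        | succ n ih =>
          intro s hs h1
          have h4 := hB s h1 (by omega)
          have h5 := ih (s+1) (by omega) (by omega)
          omega
      have hdownb : ∀ s, 1 ≤ s → s ≤ m+1 → s - 1 ≤ U s := by
        intro s
        induction s with
        | zero => omega
        | succ n ih =>
          intro _ h2
          by_cases hn : n = 0
          · subst hn; omega
          · have h3 := ih (by omega) (by omega)
            have h4 := hB n (by omega) (by omega)
            omega
      have hUval : ∀ s, 1 ≤ s → s ≤ m+1 → U s = s - 1 := by
        intro s h1 h2
        have := hupb (m+1-s) s (by omega) h1
        have := hdownb s h1 h2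
        omega
      refine ⟨-k, ?_⟩
      intro l hl
      have h1 : 1 ≤ l + 1 := by omega
      have h2 : l + 1 ≤ m := by omega
      have e := hpair (l+1) h1 h2
      have eU1 : U (l+1) = l := by rw [hUval (l+1) h1 (by omega)]; omega
      have eU2 : U (l+1+1) = l+1 := by rw [hUval (l+1+1) (by omega) (by omega)]; omega
      rw [eU1, eU2] at e
      linear_combination e
  -- constancy of increments
  have hqcop : IsCoprime (q:ℤ) (p:ℤ) := Nat.isCoprime_iff_coprime.mpr hcop.symm
  have hconst : ∀ l l', l < m → l' < m →
      x' (l+1) - x' l = x' (l'+1) - x' l' ∧ y' (l+1) - y' (l+2) = y' (l'+1) - y' (l'+2) := by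
    intro l l' hl hl'
    have e1 := hcons l hl
    have e2 := hcons l' hl'
    have hcomb : (((x' (l+1):ℤ) - x' l) - ((x' (l'+1):ℤ) - x' l'))*p
        = (((y' (l+1):ℤ) - y' (l+2)) - ((y' (l'+1):ℤ) - y' (l'+2)))*q := by
      linear_combination e1 - e2
    have hdvd : (q:ℤ) ∣ (((x' (l+1):ℤ) - x' l) - ((x' (l'+1):ℤ) - x' l')) := by
      apply hqcop.dvd_of_dvd_mul_right
      exact ⟨(((y' (l+1):ℤ) - y' (l+2)) - ((y' (l'+1):ℤ) - y' (l'+2))),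
        by linear_combination hcomb⟩
    -- bounds
    have hb1 : x' l < x' (l+1) := hx'lt l (l+1) (by omega) (by omega)
    have hb2 : x' (l+1) ≤ x m := hx'top (l+1) (by omega)
    have hb1' : x' l' < x' (l'+1) := hx'lt l' (l'+1) (by omega) (by omega)
    have hb2' : x' (l'+1) ≤ x m := hx'top (l'+1) (by omega)
    have hzero : ((x' (l+1):ℤ) - x' l) - ((x' (l'+1):ℤ) - x' l') = 0 := by
      rcases hdvd with ⟨e, he⟩
      have hq' : (0:ℤ) < q := by exact_mod_cast hq0
      have hb : -(q:ℤ) < (((x' (l+1):ℤ) - x' l) - ((x' (l'+1):ℤ) - x' l')) ∧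
          (((x' (l+1):ℤ) - x' l) - ((x' (l'+1):ℤ) - x' l')) < q := by
        constructor <;> push_cast <;> omega
      rw [he] at hb ⊢
      have he0 : e = 0 := by
        by_contra he0
        rcases lt_or_gt_of_ne he0 with h | h
        · have h2 : (q:ℤ)*e ≤ q*(-1) := mul_le_mul_of_nonneg_left (by omega) (by omega)
          have := hb.1
          linarith
        · have h2 : (q:ℤ)*1 ≤ q*e := mul_le_mul_of_nonneg_left (by omega) (by omega)
          have := hb.2
          linarith
      rw [he0]; ring
    have hx_eq : x' (l+1) - x' l = x' (l'+1) - x' l' := by push_cast at hzero; omega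
    refine ⟨hx_eq, ?_⟩
    have hyzero : ((y' (l+1):ℤ) - y' (l+2)) - ((y' (l'+1):ℤ) - y' (l'+2)) = 0 := by
      have hq' : (0:ℤ) < q := by exact_mod_cast hq0
      have := hcomb
      rw [hzero] at this
      simp at this
      rcases this with h | h
      · exact h
      · exfalso; omega
    have hyy1 : y' (l+2) < y' (l+1) := hy'lt (l+1) (l+2) (by omega) (by omega) (by omega)
    have hyy2 : y' (l'+2) < y' (l'+1) := hy'lt (l'+1) (l'+2) (by omega) (by omega) (by omega)
    push_cast at hyzero
    omega
  -- values
  have hxval : ∀ i, i ≤ m → x' i = i * x 1 := by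
    intro i
    induction i with
    | zero => intro _; rw [hx'0]; ring
    | succ n ih =>
      intro h2
      have hst := (hconst n 0 (by omega) (by omega)).1
      have h0 : x' (0+1) - x' 0 = x 1 := by
        simp only [Nat.zero_add, hx'0, Nat.sub_zero]
        exact hx'eq 1 le_rfl
      have hlt := hx'lt n (n+1) (by omega) (by omega)
      have := ih (by omega)
      rw [Nat.succ_mul]
      omega
  have hyval : ∀ d s, s + d = m+1 → 1 ≤ s → y' s = d * y m := by
    intro d
    induction d with
    | zero =>
      intro s hs h1
      have : y' s = 0 := hy'0 s (by omega)
      omega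
    | succ n ih =>
      intro s hs h1
      have hst := (hconst (s-1) (m-1) (by omega) (by omega)).2
      have hident : s - 1 + 1 = s := by omega
      have hident2 : s - 1 + 2 = s + 1 := by omega
      have hident3 : m - 1 + 1 = m := by omega
      have hident4 : m - 1 + 2 = m + 1 := by omega
      rw [hident, hident2, hident3, hident4] at hst
      have hym' : y' m = y m := hy'eq m le_rfl
      have hym0 : y' (m+1) = 0 := hy'0 (m+1) (by omega)
      have hy1 : y' (s+1) < y' s := hy'lt s (s+1) h1 (by omega) (by omega)
      have hys1 := ih (s+1) (by omega) (by omega)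
      rw [Nat.succ_mul]
      omega
  -- assemble
  refine ⟨x 1, y m, hx1, hym, ?_, ?_, ?_⟩
  · have h1 : x' m = m * x 1 := hxval m le_rfl
    have h2 : x' m = x m := hx'eq m hm
    have : x m = m * x 1 := by omega
    linarith
  · have h1 : y' 1 = m * y m := hyval m 1 (by omega) le_rfl
    have h2 : y' 1 = y 1 := hy'eq 1 hm
    have : y 1 = m * y m := by omega
    linarith
  · intro i h1 h2
    constructor
    · have := hxval i h2
      rw [hx'eq i h1] at this
      exact this
    · have := hyval (m+1-i) i (by omega) h1
      rw [hy'eq i h2] at this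
      exact this
end

section
/- In the polynomial ring T = k[u,v,u_1,…,u_{n-2}], each 2×2 minor of the matrix A whose first row is (u_{n-2}, u^x, v^{p-(n-1)y}, u_1, …, u_{n-3}) and second row is (u^{q-(n-1)x}, v^y, u_1, u_2, …, u_{n-2}) lies in the kernel of the k-algebra map φ: T → k[t] sending u ↦ t^p, v ↦ t^q, u_i ↦ t^{h_i}, where h_i = pq - ix·p - (n-1-i)y·q. -/
/-- Each 2×2 minor of the matrix A (rows
(u_{n-2}, u^x, v^{p-(n-1)y}, u_1, …, u_{n-3}) and
(u^{q-(n-1)x}, v^y, u_1, …, u_{n-2})) lies in the kernel of the k-algebra map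
φ : k[u,v,u_1,…,u_{n-2}] → k[t], u ↦ t^p, v ↦ t^q, u_i ↦ t^{h_i}.
Variables are encoded as X 0 = u, X 1 = v, X (i+1) = u_i. -/
theorem stmt_15 (K : Type*) [Field K] (p q n x y : ℕ)
    (hp : 3 ≤ p) (hpq : p < q) (hcop : Nat.Coprime p q)
    (hn : 3 ≤ n) (hx : 0 < x) (hy : 0 < y)
    (hxq : 2 * ((n - 2) * x) ≤ q) (hyp : 2 * ((n - 2) * y) ≤ p)
    (h : ℕ → ℕ)
    (hh : ∀ i, 1 ≤ i → i ≤ n - 2 → h i + (i * x) * p + ((n - 1 - i) * y) * q = p * q)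
    (deg : ℕ → ℕ) (hdeg0 : deg 0 = p) (hdeg1 : deg 1 = q)
    (hdeg : ∀ i, 1 ≤ i → i ≤ n - 2 → deg (i + 1) = h i)
    (A0 A1 : ℕ → MvPolynomial ℕ K)
    (hA0 : ∀ j, j < n → A0 j =
      if j = 0 then MvPolynomial.X (n - 1)
      else if j = 1 then MvPolynomial.X 0 ^ x
      else if j = 2 then MvPolynomial.X 1 ^ (p - (n - 1) * y)
      else MvPolynomial.X (j - 1))
    (hA1 : ∀ j, j < n → A1 j =
      if j = 0 then MvPolynomial.X 0 ^ (q - (n - 1) * x)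
      else if j = 1 then MvPolynomial.X 1 ^ y
      else MvPolynomial.X j) :
    ∀ c d, c < n → d < n →
      MvPolynomial.aeval (fun j => (Polynomial.X : Polynomial K) ^ deg j)
        (A0 c * A1 d - A0 d * A1 c) = 0 := by

  obtain ⟨m, rfl⟩ : ∃ m, n = m + 3 := ⟨n - 3, by omega⟩
  have e2 : m + 3 - 2 = m + 1 := by omega
  have e1 : m + 3 - 1 = m + 2 := by omega
  rw [e2] at hxq hyp hh hdeg
  rw [e1] at hA0 hA1 hh
  have hx1 : (m + 2) * x ≤ q := by
    calc (m + 2) * x ≤ 2 * ((m + 1) * x) := by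
          have : (m+2) * x ≤ (2*(m+1)) * x := Nat.mul_le_mul_right x (by omega)
          linarith [this]
      _ ≤ q := hxq
  have hy1 : (m + 2) * y ≤ p := by
    calc (m + 2) * y ≤ 2 * ((m + 1) * y) := by
          have : (m+2) * y ≤ (2*(m+1)) * y := Nat.mul_le_mul_right y (by omega)
          linarith [this]
      _ ≤ p := hyp
  have key : ∀ j, j < m + 3 → ∃ e f,
      (MvPolynomial.aeval (fun j => (Polynomial.X : Polynomial K) ^ deg j)) (A0 j)
        = Polynomial.X ^ e ∧
      (MvPolynomial.aeval (fun j => (Polynomial.X : Polynomial K) ^ deg j)) (A1 j)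
        = Polynomial.X ^ f ∧ e + y * q = f + x * p := by
    intro j hj
    match j with
    | 0 =>
      refine ⟨h (m+1), p * (q - (m+2)*x), ?_, ?_, ?_⟩
      · rw [hA0 0 hj]
        simp [hdeg (m+1) (by omega) (by omega)]
      · rw [hA1 0 hj]
        norm_num
        simp only [map_pow, MvPolynomial.aeval_X, hdeg0, ← pow_mul]
      · have hh1 := hh (m+1) (by omega) (by omega)
        have e3 : m + 2 - (m + 1) = 1 := by omega
        rw [e3] at hh1
        zify [hx1] at hh1 ⊢
        linear_combination hh1
    | 1 =>
      refine ⟨p * x, q * y, ?_, ?_, by ring⟩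
      · rw [hA0 1 hj]
        norm_num
        simp only [map_pow, MvPolynomial.aeval_X, hdeg0, ← pow_mul]
      · rw [hA1 1 hj]
        norm_num
        simp only [map_pow, MvPolynomial.aeval_X, hdeg1, ← pow_mul]
    | 2 =>
      refine ⟨q * (p - (m+2)*y), h 1, ?_, ?_, ?_⟩
      · rw [hA0 2 hj]
        norm_num
        simp only [map_pow, MvPolynomial.aeval_X, hdeg1, ← pow_mul]
      · rw [hA1 2 hj]
        norm_num
        simp [hdeg 1 (by omega) (by omega)]
      · have hh1 := hh 1 (by omega) (by omega)
        have e3 : m + 2 - 1 = m + 1 := by omega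
        rw [e3] at hh1
        zify [hy1] at hh1 ⊢
        linear_combination -hh1
    | (j+3) =>
      obtain ⟨k, rfl⟩ : ∃ k, m = j + 1 + k := ⟨m - j - 1, by omega⟩
      refine ⟨h (j+1), h (j+2), ?_, ?_, ?_⟩
      · rw [hA0 (j+3) hj]
        norm_num
        simp [hdeg (j+1) (by omega) (by omega)]
      · rw [hA1 (j+3) hj]
        norm_num
        simp [hdeg (j+2) (by omega) (by omega)]
      · have hh1 := hh (j+1) (by omega) (by omega)
        have hh2 := hh (j+2) (by omega) (by omega)
        have e3 : j + 1 + k + 2 - (j + 1) = k + 2 := by omega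
        have e4 : j + 1 + k + 2 - (j + 2) = k + 1 := by omega
        rw [e3] at hh1
        rw [e4] at hh2
        zify at hh1 hh2 ⊢
        linear_combination hh1 - hh2
  intro c d hcn hdn
  obtain ⟨ec, fc, hc0, hc1, hc2⟩ := key c hcn
  obtain ⟨ed, fd, hd0, hd1, hd2⟩ := key d hdn
  rw [map_sub, map_mul, map_mul, hc0, hc1, hd0, hd1, ← pow_add, ← pow_add]
  have hef : ec + fd = ed + fc := by linarith
  rw [hef, sub_self]
end
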